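/- (Burning algorithm) Let G be an Eulerian digraph with sink, and let β be the chip configuration β(v) = outdeg(v) − indeg(v) (which is nonnegative). A stable chip configuration σ is recurrent if and only if (σ + β)° = σ. Moreover, if σ is recurrent, then each non-sink vertex fires exactly once during the stabilization of σ + β. -/

import Mathlib

/-!
Write `Δ` for the reduced Laplacian acting on firing counts: a legal firing sequence `l` turns `τ`
into `τ - Δ (odometer l)`, and `σ + β = σ + Δ 1`. The argument rests on Dhar's forbidden
subconfigurations. A recurrent configuration has none, since a configuration with at least
`indeg v` chips at every `v` has none and legal firings create none. If `σ` has none and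
`σ + Δ z` is stable with `z ≥ 0`, then `z = 0`, for otherwise the set where `z` is maximal would
be forbidden. Taking `z = 1 - odometer l` (the least action principle gives `odometer l ≤ 1`)
shows that every vertex fires exactly once while `σ + β` stabilises; taking `z = y - odometer l`
with `Δ y` large shows that `σ` is accessible. Conversely, if stabilising `σ + β` returns `σ`,
then `Δ (1 - odometer l) = 0`, which forces every vertex to fire exactly once. Then in any
nonempty `W` the first vertex `v` to fire keeps `numEdges v v` chips and later receives a chip
along every edge from the rest of `W`, so `W` is not forbidden.
-/

/-- The out-degree of a vertex. -/
def outdeg {V E : Type} [Fintype E] [DecidableEq V] (tail : E → V) (v : V) : ℕ :=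
  (Finset.univ.filter (fun e => tail e = v)).card

/-- The number of edges from `v` to `w`. -/
def numEdges {V E : Type} [Fintype E] [DecidableEq V] (tail head : E → V) (v w : V) : ℕ :=
  (Finset.univ.filter (fun e => tail e = v ∧ head e = w)).card

/-- The vertices other than the (global) sink `s`. -/
abbrev Vne {V : Type} (s : V) : Type := {v : V // v ≠ s}

/-- Firing the vertex `v`. -/
def fire {V E : Type} [Fintype E] [DecidableEq V] {s : V} (tail head : E → V)
    (σ : Vne s → ℕ) (v : Vne s) : Vne s → ℕ :=
  fun w =>
    if w = v then σ v + numEdges tail head v.1 v.1 - outdeg tail v.1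
    else σ w + numEdges tail head v.1 w.1

/-- A (non-sink) vertex is active when it has at least as many chips as outgoing edges. -/
def Active {V E : Type} [Fintype E] [DecidableEq V] {s : V} (tail : E → V)
    (σ : Vne s → ℕ) (v : Vne s) : Prop :=
  outdeg tail v.1 ≤ σ v

/-- The result of firing the vertices in the list `l` in order, starting from `σ`. -/
def fireList {V E : Type} [Fintype E] [DecidableEq V] {s : V} (tail head : E → V)
    (σ : Vne s → ℕ) : List (Vne s) → (Vne s → ℕ)
  | [] => σ
  | v :: l => fireList tail head (fire tail head σ v) l

/-- The firing sequence `l` is legal from `σ`. -/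
def Legal {V E : Type} [Fintype E] [DecidableEq V] {s : V} (tail head : E → V)
    (σ : Vne s → ℕ) : List (Vne s) → Prop
  | [] => True
  | v :: l => Active tail σ v ∧ Legal tail head (fire tail head σ v) l

/-- A configuration is stable when no non-sink vertex is active. -/
def Stable {V E : Type} [Fintype E] [DecidableEq V] {s : V} (tail : E → V)
    (σ : Vne s → ℕ) : Prop :=
  ∀ v, σ v < outdeg tail v.1

/-- `σ` is accessible: from any chip configuration `ζ` one can obtain `σ` by adding
some chips and then performing a legal sequence of firings of active vertices. -/
def Accessible {V E : Type} [Fintype E] [DecidableEq V] {s : V} (tail head : E → V)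
    (σ : Vne s → ℕ) : Prop :=
  ∀ ζ : Vne s → ℕ, ∃ (β : Vne s → ℕ) (l : List (Vne s)),
    Legal tail head (fun v => ζ v + β v) l ∧ fireList tail head (fun v => ζ v + β v) l = σ

/-- A chip configuration is recurrent when it is both stable and accessible. -/
def Recurrent {V E : Type} [Fintype E] [DecidableEq V] {s : V} (tail head : E → V)
    (σ : Vne s → ℕ) : Prop :=
  Stable tail σ ∧ Accessible tail head σ

/-- The in-degree of a vertex. -/
def indeg {V E : Type} [Fintype E] [DecidableEq V] (head : E → V) (v : V) : ℕ :=
  (Finset.univ.filter (fun e => head e = v)).card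

open Finset

def SinkReachable {V E : Type} (tail head : E → V) (s : V) : Prop :=
  ∀ v, Relation.ReflTransGen (fun a b => ∃ e, tail e = a ∧ head e = b) v s

section Definitions

variable {V E : Type} [DecidableEq V] [Fintype E] (tail head : E → V) {s : V}

def inflow [Fintype V] (x : Vne s → ℤ) (c : V) : ℤ :=
  ∑ w : Vne s, x w * numEdges tail head w.1 c

def laplacian [Fintype V] (x : Vne s → ℤ) (v : Vne s) : ℤ :=
  x v * outdeg tail v.1 - inflow tail head x v.1

def odometer (l : List (Vne s)) (v : Vne s) : ℤ :=
  l.count v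

def beta : Vne s → ℕ :=
  fun v => outdeg tail v.1 - indeg head v.1

/-- A nonempty set `W` of non-sink vertices is a forbidden subconfiguration of `σ` when every
`v ∈ W` holds fewer chips than there are edges from `W` to `v`. -/
def NoForbiddenSubconfig (σ : Vne s → ℕ) : Prop :=
  ∀ W : Finset (Vne s), W.Nonempty → ∃ v ∈ W, ∑ w ∈ W, numEdges tail head w.1 v.1 ≤ σ v

end Definitions

variable {V E : Type} [DecidableEq V] [Fintype E] {tail head : E → V} {s : V}

theorem numEdges_le_outdeg (v w : V) : numEdges tail head v w ≤ outdeg tail v :=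
  card_le_card fun e he => by
    simp only [mem_filter] at he ⊢
    exact ⟨he.1, he.2.1⟩

theorem numEdges_pos {e : E} {v w : V} (hv : tail e = v) (hw : head e = w) :
    0 < numEdges tail head v w :=
  card_pos.2 ⟨e, by simp [hv, hw]⟩

@[elab_as_elim]
theorem SinkReachable.induction (hreach : SinkReachable tail head s) {P : Vne s → Prop}
    (step : ∀ (v : Vne s) (c : V), 0 < numEdges tail head v.1 c → (∀ hc : c ≠ s, P ⟨c, hc⟩) → P v)
    (v : Vne s) : P v := by
  suffices ∀ a, Relation.ReflTransGen (fun a b => ∃ e, tail e = a ∧ head e = b) a s →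
      ∀ ha : a ≠ s, P ⟨a, ha⟩ from this v.1 (hreach v.1) v.2
  intro a hpath
  induction hpath using Relation.ReflTransGen.head_induction_on with
  | refl => exact fun ha => absurd rfl ha
  | head hab _ ih =>
    obtain ⟨e, rfl, rfl⟩ := hab
    exact fun ha => step _ _ (numEdges_pos rfl rfl) ih

theorem fireList_append (τ : Vne s → ℕ) (l₁ l₂ : List (Vne s)) :
    fireList tail head τ (l₁ ++ l₂) = fireList tail head (fireList tail head τ l₁) l₂ := by
  induction l₁ generalizing τ with
  | nil => rfl
  | cons u l ih => exact ih _

theorem legal_append {τ : Vne s → ℕ} {l₁ l₂ : List (Vne s)} :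
    Legal tail head τ (l₁ ++ l₂) ↔
      Legal tail head τ l₁ ∧ Legal tail head (fireList tail head τ l₁) l₂ := by
  induction l₁ generalizing τ with
  | nil => simp [Legal, fireList]
  | cons u l ih => simp [Legal, fireList, ih, and_assoc]

theorem exists_legal_stable_of_length_le {τ : Vne s → ℕ} (n : ℕ)
    (h : ∀ l, Legal tail head τ l → l.length ≤ n) :
    ∃ l, Legal tail head τ l ∧ Stable tail (fireList tail head τ l) := by
  induction n generalizing τ with
  | zero => exact ⟨[], trivial, fun v => not_le.1 fun hv => by simpa using h [v] ⟨hv, trivial⟩⟩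
  | succ n ih =>
    by_cases hτ : Stable tail τ
    · exact ⟨[], trivial, hτ⟩
    · obtain ⟨v, hv⟩ : ∃ v, Active tail τ v := by simpa [Stable, Active] using hτ
      obtain ⟨l, hl, hst⟩ := ih (τ := fire tail head τ v) fun l hl => by
        simpa using h (v :: l) ⟨hv, hl⟩
      exact ⟨v :: l, ⟨hv, hl⟩, hst⟩

theorem odometer_nonneg (l : List (Vne s)) : 0 ≤ odometer l :=
  fun _ => Nat.cast_nonneg _

theorem odometer_append (l₁ l₂ : List (Vne s)) :
    odometer (l₁ ++ l₂) = odometer l₁ + odometer l₂ := by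
  funext v
  simp [odometer]

theorem odometer_singleton (u : Vne s) : odometer [u] = Pi.single u 1 := by
  funext v
  by_cases hvu : v = u
  · simp [odometer, hvu]
  · simp [odometer, hvu, Ne.symm hvu]

theorem odometer_eq_one_iff {l : List (Vne s)} : odometer l = 1 ↔ ∀ v, l.count v = 1 := by
  simp [funext_iff, odometer]

theorem noForbiddenSubconfig_fire {τ : Vne s → ℕ} (h : NoForbiddenSubconfig tail head τ)
    {u : Vne s} (hu : Active tail τ u) : NoForbiddenSubconfig tail head (fire tail head τ u) := by
  intro W hW
  have fire_of_ne (v : Vne s) (hv : v ≠ u) : fire tail head τ u v = τ v + numEdges tail head u v :=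
    if_neg hv
  by_cases huW : u ∈ W
  · rcases (W.erase u).eq_empty_or_nonempty with hWu | hWu
    · obtain rfl := ((erase_eq_empty_iff W u).1 hWu).resolve_left hW.ne_empty
      refine ⟨u, mem_singleton_self u, ?_⟩
      have : outdeg tail u.1 ≤ τ u := hu
      simp only [sum_singleton, fire, if_true]
      omega
    · obtain ⟨v, hvW, hv⟩ := h _ hWu
      refine ⟨v, mem_of_mem_erase hvW, ?_⟩
      rw [← sum_erase_add _ _ huW, fire_of_ne v (ne_of_mem_erase hvW)]
      omega
  · obtain ⟨v, hvW, hv⟩ := h W hW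
    refine ⟨v, hvW, ?_⟩
    rw [fire_of_ne v (ne_of_mem_of_not_mem hvW huW)]
    omega

theorem noForbiddenSubconfig_fireList {τ : Vne s → ℕ} (h : NoForbiddenSubconfig tail head τ)
    {l : List (Vne s)} (hl : Legal tail head τ l) :
    NoForbiddenSubconfig tail head (fireList tail head τ l) := by
  induction l generalizing τ with
  | nil => exact h
  | cons u l ih => exact ih (noForbiddenSubconfig_fire h hl.1) hl.2

variable [Fintype V]

section Degrees

theorem outdeg_eq_add_sum_numEdges (s v : V) :
    outdeg tail v = numEdges tail head v s + ∑ w : Vne s, numEdges tail head v w.1 := by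
  rw [outdeg, card_eq_sum_card_fiberwise (f := head) (t := univ) fun _ _ => mem_univ _,
    ← Fintype.sum_eq_add_sum_subtype_ne (fun w => numEdges tail head v w) s]
  simp only [numEdges, filter_filter]

theorem indeg_eq_add_sum_numEdges (s v : V) :
    indeg head v = numEdges tail head s v + ∑ w : Vne s, numEdges tail head w.1 v := by
  rw [indeg, card_eq_sum_card_fiberwise (f := tail) (t := univ) fun _ _ => mem_univ _,
    ← Fintype.sum_eq_add_sum_subtype_ne (fun w => numEdges tail head w v) s]
  simp only [numEdges, filter_filter, and_comm]

theorem sum_numEdges_le_indeg (W : Finset (Vne s)) (c : V) :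
    ∑ w ∈ W, numEdges tail head w.1 c ≤ indeg head c := by
  rw [indeg_eq_add_sum_numEdges (tail := tail) s]
  exact (sum_le_sum_of_subset (subset_univ W)).trans (Nat.le_add_left _ _)

theorem sum_numEdges_eq_indeg (hs : outdeg tail s = 0) (c : V) :
    ∑ w : Vne s, numEdges tail head w.1 c = indeg head c := by
  have : numEdges tail head s c = 0 := Nat.eq_zero_of_le_zero (hs ▸ numEdges_le_outdeg s c)
  rw [indeg_eq_add_sum_numEdges (tail := tail) s, this, zero_add]

end Degrees

section Laplacian

theorem inflow_nonneg {x : Vne s → ℤ} (hx : 0 ≤ x) (c : V) : 0 ≤ inflow tail head x c :=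
  sum_nonneg fun w _ => mul_nonneg (hx w) (Nat.cast_nonneg _)

theorem le_inflow {x : Vne s → ℤ} (hx : 0 ≤ x) {v : Vne s} {c : V}
    (hvc : 0 < numEdges tail head v.1 c) : x v ≤ inflow tail head x c :=
  (le_mul_of_one_le_right (hx v) (Nat.one_le_cast.2 hvc)).trans <|
    single_le_sum (f := fun w : Vne s => x w * numEdges tail head w.1 c)
      (fun w _ => mul_nonneg (hx w) (Nat.cast_nonneg _)) (mem_univ v)

theorem sum_numEdges_le_inflow {x : Vne s → ℤ} (hx : 0 ≤ x) {W : Finset (Vne s)}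
    (hW : ∀ w ∈ W, 1 ≤ x w) (c : V) :
    ∑ w ∈ W, (numEdges tail head w.1 c : ℤ) ≤ inflow tail head x c :=
  calc ∑ w ∈ W, (numEdges tail head w.1 c : ℤ)
      ≤ ∑ w ∈ W, x w * numEdges tail head w.1 c :=
        sum_le_sum fun w hw => le_mul_of_one_le_left (Nat.cast_nonneg _) (hW w hw)
    _ ≤ inflow tail head x c :=
        sum_le_sum_of_subset_of_nonneg (subset_univ W)
          fun w _ _ => mul_nonneg (hx w) (Nat.cast_nonneg _)

theorem laplacian_add (x y : Vne s → ℤ) (v : Vne s) :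
    laplacian tail head (x + y) v = laplacian tail head x v + laplacian tail head y v := by
  simp only [laplacian, inflow, Pi.add_apply, add_mul, sum_add_distrib]
  ring

theorem laplacian_sub (x y : Vne s → ℤ) (v : Vne s) :
    laplacian tail head (x - y) v = laplacian tail head x v - laplacian tail head y v := by
  simp only [laplacian, inflow, Pi.sub_apply, sub_mul, sum_sub_distrib]
  ring

theorem laplacian_zero (v : Vne s) : laplacian tail head 0 v = 0 := by
  simp [laplacian, inflow]

theorem laplacian_single (u v : Vne s) :
    laplacian tail head (Pi.single u 1) v =
      (if v = u then (outdeg tail v.1 : ℤ) else 0) - numEdges tail head u.1 v.1 := by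
  simp [laplacian, inflow, Pi.single_apply]

theorem laplacian_one (hs : outdeg tail s = 0) (v : Vne s) :
    laplacian tail head 1 v = outdeg tail v.1 - indeg head v.1 := by
  simp [laplacian, inflow, ← sum_numEdges_eq_indeg (head := head) hs v.1]

theorem laplacian_indicator_of_mem {W : Finset (Vne s)} {v : Vne s} (hv : v ∈ W) :
    laplacian tail head (fun w => if w ∈ W then 1 else 0) v =
      outdeg tail v.1 - ∑ w ∈ W, (numEdges tail head w.1 v.1 : ℤ) := by
  simp [laplacian, inflow, hv, ite_mul, sum_ite_mem]

theorem sum_laplacian (x : Vne s → ℤ) :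
    ∑ v, laplacian tail head x v = inflow tail head x s := by
  simp only [laplacian, inflow, sum_sub_distrib]
  rw [sum_comm, ← sum_sub_distrib]
  refine sum_congr rfl fun w _ => ?_
  rw [← mul_sum, ← mul_sub, outdeg_eq_add_sum_numEdges (head := head) s]
  push_cast
  ring

theorem laplacian_nonpos_of_eq_zero {x : Vne s → ℤ} (hx : 0 ≤ x) {v : Vne s} (hv : x v = 0) :
    laplacian tail head x v ≤ 0 := by
  simpa [laplacian, hv] using inflow_nonneg hx v.1

theorem laplacian_nonneg_of_forall_le {x : Vne s → ℤ} {v : Vne s}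
    (hdeg : indeg head v.1 ≤ outdeg tail v.1) (hmax : ∀ w, x w ≤ x v) (hv : 0 ≤ x v) :
    0 ≤ laplacian tail head x v := by
  have : inflow tail head x v.1 ≤ x v * indeg head v.1 :=
    calc inflow tail head x v.1
        ≤ ∑ w : Vne s, x v * numEdges tail head w.1 v.1 :=
          sum_le_sum fun w _ => mul_le_mul_of_nonneg_right (hmax w) (Nat.cast_nonneg _)
      _ ≤ x v * indeg head v.1 := by
          rw [← mul_sum]
          exact mul_le_mul_of_nonneg_left (by exact_mod_cast sum_numEdges_le_indeg univ v.1) hv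
  have := mul_le_mul_of_nonneg_left (Int.ofNat_le.2 hdeg) hv
  unfold laplacian
  linarith

end Laplacian

section Firing

theorem length_eq_sum_odometer (l : List (Vne s)) : (l.length : ℤ) = ∑ v, odometer l v := by
  induction l with
  | nil => simp [odometer]
  | cons u l ih =>
    rw [← List.singleton_append, odometer_append, odometer_singleton]
    simp [sum_add_distrib, ih, add_comm]

theorem fire_eq_sub_laplacian {τ : Vne s → ℕ} {u : Vne s} (hu : Active tail τ u) (v : Vne s) :
    (fire tail head τ u v : ℤ) = τ v - laplacian tail head (Pi.single u 1) v := by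
  rw [laplacian_single]
  by_cases hvu : v = u
  · subst hvu
    have : outdeg tail v.1 ≤ τ v + numEdges tail head v.1 v.1 := Nat.le_add_right_of_le hu
    simp only [fire, if_true]
    push_cast [this]
    ring
  · simp [fire, hvu]

theorem fireList_eq_sub_laplacian {τ : Vne s → ℕ} {l : List (Vne s)} (hl : Legal tail head τ l)
    (v : Vne s) :
    (fireList tail head τ l v : ℤ) = τ v - laplacian tail head (odometer l) v := by
  induction l generalizing τ with
  | nil => simp [fireList, odometer, laplacian, inflow]
  | cons u l ih =>
    rw [fireList, ih hl.2, fire_eq_sub_laplacian hl.1, ← List.singleton_append, odometer_append,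
      odometer_singleton, laplacian_add]
    ring

theorem sum_fireList_add_inflow {τ : Vne s → ℕ} {l : List (Vne s)} (hl : Legal tail head τ l) :
    ∑ v, (fireList tail head τ l v : ℤ) + inflow tail head (odometer l) s = ∑ v, (τ v : ℤ) := by
  simp only [fireList_eq_sub_laplacian hl, sum_sub_distrib, sum_laplacian]
  ring

theorem odometer_le_of_legal {σ τ : Vne s → ℕ} (hσ : Stable tail σ) {x : Vne s → ℤ} (hx : 0 ≤ x)
    (hτ : ∀ v, (τ v : ℤ) = σ v + laplacian tail head x v) {l : List (Vne s)}
    (hl : Legal tail head τ l) : odometer l ≤ x := by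
  induction l using List.reverseRecOn with
  | nil => intro v; simpa [odometer] using hx v
  | append_singleton l u ih =>
    obtain ⟨hl, hu, -⟩ := legal_append.1 hl
    have hle := ih hl
    have hlt : odometer l u < x u := by
      refine (hle u).lt_of_ne fun heq => ?_
      have hlap := laplacian_nonpos_of_eq_zero (tail := tail) (head := head)
        (sub_nonneg.2 hle) (sub_eq_zero.2 heq.symm)
      have hfin := fireList_eq_sub_laplacian hl u
      rw [laplacian_sub] at hlap
      rw [hτ] at hfin
      have : (outdeg tail u.1 : ℤ) ≤ fireList tail head τ l u := Int.ofNat_le.2 hu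
      have := Int.ofNat_lt.2 (hσ u)
      linarith
    intro v
    rw [odometer_append, odometer_singleton, Pi.add_apply, Pi.single_apply]
    split_ifs with hvu
    · subst hvu
      exact hlt
    · simpa using hle v

theorem inflow_odometer_le {τ : Vne s → ℕ} {l : List (Vne s)} (hl : Legal tail head τ l)
    (c : Vne s) :
    inflow tail head (odometer l) c.1 ≤ ∑ v, (τ v : ℤ) + odometer l c * outdeg tail c.1 := by
  have hsum := sum_fireList_add_inflow hl
  have hc := fireList_eq_sub_laplacian hl c
  have hle : (fireList tail head τ l c : ℤ) ≤ ∑ v, (fireList tail head τ l v : ℤ) :=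
    single_le_sum (f := fun v => (fireList tail head τ l v : ℤ)) (fun _ _ => Nat.cast_nonneg _)
      (mem_univ c)
  have := inflow_nonneg (tail := tail) (head := head) (odometer_nonneg l) s
  have := Nat.cast_nonneg (α := ℤ) (τ c)
  unfold laplacian at hc
  linarith

theorem inflow_odometer_sink_le {τ : Vne s → ℕ} {l : List (Vne s)} (hl : Legal tail head τ l) :
    inflow tail head (odometer l) s ≤ ∑ v, (τ v : ℤ) := by
  have := sum_fireList_add_inflow hl
  have : 0 ≤ ∑ v, (fireList tail head τ l v : ℤ) := sum_nonneg fun _ _ => Nat.cast_nonneg _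
  linarith

end Firing

section Stabilization

theorem exists_odometer_bound (hreach : SinkReachable tail head s) (τ : Vne s → ℕ) (v : Vne s) :
    ∃ B : ℤ, ∀ l, Legal tail head τ l → odometer l v ≤ B := by
  refine hreach.induction (fun a b hab ih => ?_) v
  by_cases hb : b = s
  · subst hb
    exact ⟨_, fun l hl => (le_inflow (odometer_nonneg l) hab).trans (inflow_odometer_sink_le hl)⟩
  · obtain ⟨B, hB⟩ := ih hb
    refine ⟨∑ v, (τ v : ℤ) + B * outdeg tail b, fun l hl =>
      (le_inflow (odometer_nonneg l) hab).trans ((inflow_odometer_le hl ⟨b, hb⟩).trans ?_)⟩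
    gcongr
    exact hB l hl

theorem exists_legal_stable (hreach : SinkReachable tail head s) (τ : Vne s → ℕ) :
    ∃ l, Legal tail head τ l ∧ Stable tail (fireList tail head τ l) := by
  choose B hB using exists_odometer_bound hreach τ
  refine exists_legal_stable_of_length_le (∑ v, B v).toNat fun l hl => ?_
  have : (l.length : ℤ) ≤ ∑ v, B v := by
    rw [length_eq_sum_odometer]
    exact sum_le_sum fun v _ => hB v l hl
  omega

theorem exists_le_laplacian_odometer (hreach : SinkReachable tail head s) (ζ : Vne s → ℕ) :
    ∃ l : List (Vne s), ∀ v, (ζ v : ℤ) ≤ laplacian tail head (odometer l) v := by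
  obtain ⟨l, hl, hst⟩ := exists_legal_stable hreach fun v => ζ v + outdeg tail v.1
  refine ⟨l, fun v => ?_⟩
  have := fireList_eq_sub_laplacian hl v
  have := hst v
  push_cast at *
  omega

end Stabilization

section ForbiddenSubconfig

theorem noForbiddenSubconfig_of_indeg_le {τ : Vne s → ℕ} (h : ∀ v, indeg head v.1 ≤ τ v) :
    NoForbiddenSubconfig tail head τ := fun W ⟨v, hv⟩ =>
  ⟨v, hv, (sum_numEdges_le_indeg W v.1).trans (h v)⟩

theorem Accessible.noForbiddenSubconfig {σ : Vne s → ℕ} (h : Accessible tail head σ) :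
    NoForbiddenSubconfig tail head σ := by
  obtain ⟨β, l, hl, rfl⟩ := h fun v => indeg head v.1
  exact noForbiddenSubconfig_fireList (noForbiddenSubconfig_of_indeg_le fun v => le_self_add) hl

theorem eq_zero_of_noForbiddenSubconfig (heul : ∀ v : V, v ≠ s → indeg head v ≤ outdeg tail v)
    {σ : Vne s → ℕ} (hσ : NoForbiddenSubconfig tail head σ) {z : Vne s → ℤ} (hz : 0 ≤ z)
    (hst : ∀ v, (σ v : ℤ) + laplacian tail head z v < outdeg tail v.1) : z = 0 := by
  by_contra hne
  obtain ⟨w₀, hw₀⟩ := Function.ne_iff.1 hne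
  have : Nonempty (Vne s) := ⟨w₀⟩
  obtain ⟨v₀, hv₀⟩ := Finite.exists_max z
  set W := univ.filter fun v => z v = z v₀
  set ind : Vne s → ℤ := fun w => if w ∈ W then 1 else 0
  obtain ⟨v, hvW, hv⟩ := hσ W ⟨v₀, by simp [W]⟩
  have hzv : z v = z v₀ := (mem_filter.1 hvW).2
  have hpos : 0 < z v₀ := (lt_of_le_of_ne (hz w₀) (Ne.symm hw₀)).trans_le (hv₀ w₀)
  have hrest : 0 ≤ laplacian tail head (z - ind) v := by
    refine laplacian_nonneg_of_forall_le (heul v.1 v.2) (fun w => ?_) ?_ <;>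
      simp only [Pi.sub_apply, ind, hvW, if_true]
    · by_cases hw : w ∈ W
      · simp [hw, (mem_filter.1 hw).2, hzv]
      · have : z w ≠ z v₀ := fun h => hw (mem_filter.2 ⟨mem_univ w, h⟩)
        have := hv₀ w
        simp only [hw, if_false]
        omega
    · omega
  have := hst v
  rw [← sub_add_cancel z ind, laplacian_add, laplacian_indicator_of_mem hvW] at this
  have : ((∑ w ∈ W, numEdges tail head w.1 v.1 : ℕ) : ℤ) ≤ σ v := Int.ofNat_le.2 hv
  push_cast at *
  linarith

theorem noForbiddenSubconfig_fireList_of_count_eq_one {τ : Vne s → ℕ} {l : List (Vne s)}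
    (hl : Legal tail head τ l) (hcount : ∀ v, l.count v = 1) :
    NoForbiddenSubconfig tail head (fireList tail head τ l) := by
  intro W ⟨w₀, hw₀⟩
  have hmem (w : Vne s) : w ∈ l := List.count_pos_iff.1 (by rw [hcount w]; exact one_pos)
  have hnodup : l.Nodup := List.nodup_iff_count_le_one.2 fun v => (hcount v).le
  -- `v` is the first vertex of `W` to fire
  have hsome : (l.find? fun w => decide (w ∈ W)).isSome :=
    List.find?_isSome.2 ⟨w₀, hmem w₀, decide_eq_true hw₀⟩
  obtain ⟨v, hfind⟩ := Option.isSome_iff_exists.1 hsome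
  obtain ⟨hvW, p, q, rfl, hp⟩ := List.find?_eq_some_iff_append.1 hfind
  rw [decide_eq_true_iff] at hvW
  obtain ⟨-, hv, hq⟩ := legal_append.1 hl
  have hvq : v ∉ q := (List.nodup_cons.1 (List.nodup_middle.1 hnodup)).1 ∘ List.mem_append_right p
  have hWq : ∀ w ∈ W.erase v, 1 ≤ odometer q w := fun w hw => by
    have : w ∈ q := by
      rcases List.mem_append.1 (hmem w) with hwp | hwvq
      · simpa [mem_of_mem_erase hw] using hp w hwp
      · exact (List.mem_cons.1 hwvq).resolve_left (ne_of_mem_erase hw)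
    exact Nat.one_le_cast.2 (List.count_pos_iff.2 this)
  have hfin := fireList_eq_sub_laplacian hq v
  have hself : numEdges tail head v.1 v.1 ≤ fire tail head (fireList tail head τ p) v v := by
    have : outdeg tail v.1 ≤ fireList tail head τ p v := hv
    simp only [fire, if_true]
    omega
  have hin := sum_numEdges_le_inflow (tail := tail) (head := head) (odometer_nonneg q) hWq v.1
  have hq0 : odometer q v = 0 := by simp [odometer, List.count_eq_zero.2 hvq]
  refine ⟨v, hvW, ?_⟩
  zify
  calc ∑ w ∈ W, (numEdges tail head w.1 v.1 : ℤ)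
      = ∑ w ∈ W.erase v, (numEdges tail head w.1 v.1 : ℤ) + numEdges tail head v.1 v.1 :=
        (sum_erase_add _ _ hvW).symm
    _ ≤ inflow tail head (odometer q) v.1 + fire tail head (fireList tail head τ p) v v :=
        add_le_add hin (Int.ofNat_le.2 hself)
    _ = fireList tail head τ (p ++ v :: q) v := by
        rw [fireList_append, fireList, hfin, laplacian, hq0]
        ring

end ForbiddenSubconfig

section Recurrence

/-- No edge leaves the support of `x`, yet every vertex reaches the sink. -/
theorem eq_zero_of_laplacian_eq_zero (hreach : SinkReachable tail head s) {x : Vne s → ℤ}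
    (hx : 0 ≤ x) (h : ∀ v, laplacian tail head x v = 0) : x = 0 := by
  have hinflow (c : V) (hc : ∀ hc : c ≠ s, x ⟨c, hc⟩ = 0) : inflow tail head x c = 0 := by
    by_cases hcs : c = s
    · subst hcs
      simp [← sum_laplacian, h]
    · simpa [laplacian, hc hcs] using h ⟨c, hcs⟩
  exact funext <| hreach.induction fun a b hab ih =>
    le_antisymm ((le_inflow hx hab).trans (hinflow b ih).le) (hx a)

theorem accessible_of_noForbiddenSubconfig (hreach : SinkReachable tail head s)
    (heul : ∀ v : V, v ≠ s → indeg head v ≤ outdeg tail v) {σ : Vne s → ℕ}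
    (hσ : Stable tail σ) (hnf : NoForbiddenSubconfig tail head σ) : Accessible tail head σ := by
  intro ζ
  obtain ⟨l₀, hl₀⟩ := exists_le_laplacian_odometer hreach ζ
  set τ : Vne s → ℕ := fun v => σ v + (laplacian tail head (odometer l₀) v).toNat
  have hτ (v : Vne s) : (τ v : ℤ) = σ v + laplacian tail head (odometer l₀) v := by
    have := hl₀ v
    simp only [τ]
    omega
  obtain ⟨l, hl, hst⟩ := exists_legal_stable hreach τ
  have hfin (v : Vne s) :
      (fireList tail head τ l v : ℤ) = σ v + laplacian tail head (odometer l₀ - odometer l) v := by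
    rw [fireList_eq_sub_laplacian hl, hτ, laplacian_sub]
    ring
  have hz : odometer l₀ - odometer l = 0 :=
    eq_zero_of_noForbiddenSubconfig heul hnf
      (sub_nonneg.2 (odometer_le_of_legal hσ (odometer_nonneg l₀) hτ hl))
      fun v => hfin v ▸ Int.ofNat_lt.2 (hst v)
  have hζτ : (fun v => ζ v + (τ v - ζ v)) = τ := funext fun v => by
    have := hl₀ v
    have := hτ v
    omega
  refine ⟨fun v => τ v - ζ v, l, ?_⟩
  rw [hζτ]
  exact ⟨hl, funext fun v => by simpa [hz, laplacian_zero] using hfin v⟩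

end Recurrence

section Burning

variable {σ : Vne s → ℕ} {l : List (Vne s)}

theorem fireList_add_beta (hs : outdeg tail s = 0)
    (heul : ∀ v : V, v ≠ s → indeg head v ≤ outdeg tail v)
    (hl : Legal tail head (σ + beta tail head) l) (v : Vne s) :
    (fireList tail head (σ + beta tail head) l v : ℤ) =
      σ v + laplacian tail head (1 - odometer l) v := by
  rw [fireList_eq_sub_laplacian hl, laplacian_sub, laplacian_one hs]
  simp only [Pi.add_apply, beta]
  push_cast [heul v.1 v.2]
  ring

theorem odometer_le_one (hs : outdeg tail s = 0)
    (heul : ∀ v : V, v ≠ s → indeg head v ≤ outdeg tail v) (hσ : Stable tail σ)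
    (hl : Legal tail head (σ + beta tail head) l) : odometer l ≤ 1 :=
  odometer_le_of_legal hσ zero_le_one (fun v => by
    simp only [Pi.add_apply, beta, laplacian_one hs]
    push_cast [heul v.1 v.2]
    ring) hl

theorem odometer_eq_one_of_stable (hs : outdeg tail s = 0)
    (heul : ∀ v : V, v ≠ s → indeg head v ≤ outdeg tail v) (hσ : Stable tail σ)
    (hnf : NoForbiddenSubconfig tail head σ) (hl : Legal tail head (σ + beta tail head) l)
    (hst : Stable tail (fireList tail head (σ + beta tail head) l)) : odometer l = 1 :=
  (sub_eq_zero.1 (eq_zero_of_noForbiddenSubconfig heul hnf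
    (sub_nonneg.2 (odometer_le_one hs heul hσ hl))
    fun v => fireList_add_beta hs heul hl v ▸ Int.ofNat_lt.2 (hst v))).symm

theorem odometer_eq_one_of_fireList_eq (hs : outdeg tail s = 0)
    (heul : ∀ v : V, v ≠ s → indeg head v ≤ outdeg tail v) (hreach : SinkReachable tail head s)
    (hσ : Stable tail σ) (hl : Legal tail head (σ + beta tail head) l)
    (hend : fireList tail head (σ + beta tail head) l = σ) : odometer l = 1 :=
  (sub_eq_zero.1 (eq_zero_of_laplacian_eq_zero hreach
    (sub_nonneg.2 (odometer_le_one hs heul hσ hl))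
    fun v => by simpa [hend] using fireList_add_beta hs heul hl v)).symm

theorem fireList_add_beta_eq_self (hs : outdeg tail s = 0)
    (heul : ∀ v : V, v ≠ s → indeg head v ≤ outdeg tail v)
    (hl : Legal tail head (σ + beta tail head) l) (h : odometer l = 1) :
    fireList tail head (σ + beta tail head) l = σ :=
  funext fun v => by simpa [h, laplacian_zero] using fireList_add_beta hs heul hl v

end Burning

/-- **Burning algorithm.**  Let `G` be an Eulerian digraph with sink `s` (so `s` is a
global sink and every other vertex has out-degree at least its in-degree), and let
`β(v) = outdeg(v) − indeg(v) ≥ 0`.  A stable chip configuration `σ` is recurrent if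
and only if `(σ + β)° = σ`; and if `σ` is recurrent, then each non-sink vertex fires
exactly once during the stabilization of `σ + β`. -/
theorem burning_algorithm
    {V E : Type} [Fintype V] [DecidableEq V] [Fintype E]
    (tail head : E → V)
    (s : V) (hs : outdeg tail s = 0)
    (heul : ∀ v : V, v ≠ s → indeg head v ≤ outdeg tail v)
    (hglobal : ∀ v : V,
      Relation.ReflTransGen (fun a b => ∃ e, tail e = a ∧ head e = b) v s)
    (σ : Vne s → ℕ) (hσ : Stable tail σ) :
    (Recurrent tail head σ ↔
      ∃ l : List (Vne s),
        Legal tail head (fun v => σ v + (outdeg tail v.1 - indeg head v.1)) l ∧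
        fireList tail head (fun v => σ v + (outdeg tail v.1 - indeg head v.1)) l = σ) ∧
    (Recurrent tail head σ →
      ∀ l : List (Vne s),
        Legal tail head (fun v => σ v + (outdeg tail v.1 - indeg head v.1)) l →
        Stable tail (fireList tail head (fun v => σ v + (outdeg tail v.1 - indeg head v.1)) l) →
        ∀ v : Vne s, l.count v = 1) := by
  have odometer_eq_one (hrec : Recurrent tail head σ) (l : List (Vne s))
      (hl : Legal tail head (σ + beta tail head) l)
      (hst : Stable tail (fireList tail head (σ + beta tail head) l)) : odometer l = 1 :=
    odometer_eq_one_of_stable hs heul hσ hrec.2.noForbiddenSubconfig hl hst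
  refine ⟨⟨fun hrec => ?_, fun ⟨l, hl, hend⟩ => ?_⟩,
    fun hrec l hl hst => odometer_eq_one_iff.1 (odometer_eq_one hrec l hl hst)⟩
  · obtain ⟨l, hl, hst⟩ := exists_legal_stable hglobal (σ + beta tail head)
    exact ⟨l, hl, fireList_add_beta_eq_self hs heul hl (odometer_eq_one hrec l hl hst)⟩
  · have hnf := noForbiddenSubconfig_fireList_of_count_eq_one hl
      (odometer_eq_one_iff.1 (odometer_eq_one_of_fireList_eq hs heul hglobal hσ hl hend))
    rw [hend] at hnf
    exact ⟨hσ, accessible_of_noForbiddenSubconfig hglobal heul hσ hnf⟩
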